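/- The max-relative entropy is monotone under quantum channels: for density matrices ρ, σ with supp(ρ) ⊆ supp(σ) and any completely positive trace-preserving map E, D_max(E(ρ)‖E(σ)) ≤ D_max(ρ‖σ), where D_max(ρ‖σ) = inf{λ ∈ ℝ : ρ ≤ 2^λ σ}. -/

import Mathlib

open Matrix BigOperators Classical ComplexOrder

noncomputable section

variable {n : Type*} [Fintype n] [DecidableEq n]

/-- positive-semidefinite square root, extended by 0. -/
noncomputable def msqrt (A : Matrix n n ℂ) : Matrix n n ℂ :=
  if h : A.PosSemidef then
    (h.1.eigenvectorUnitary : Matrix n n ℂ) *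
      diagonal ((↑) ∘ (Real.sqrt ·) ∘ h.1.eigenvalues) *
      (star h.1.eigenvectorUnitary : Matrix n n ℂ)
  else 0

/-- trace norm ‖X‖₁ = Tr √(XᴴX). -/
noncomputable def traceNorm (X : Matrix n n ℂ) : ℝ :=
  (msqrt (Xᴴ * X)).trace.re

/-- fidelity F(ρ,σ) = ‖√ρ√σ‖₁. -/
noncomputable def fidelity (ρ σ : Matrix n n ℂ) : ℝ :=
  traceNorm (msqrt ρ * msqrt σ)

/-- purified distance. -/
noncomputable def purifiedDist (ρ σ : Matrix n n ℂ) : ℝ :=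
  Real.sqrt (1 - (fidelity ρ σ)^2)

def IsDensityMatrix (ρ : Matrix n n ℂ) : Prop := ρ.PosSemidef ∧ ρ.trace = 1

/-- max-relative entropy. -/
noncomputable def Dmax (ρ σ : Matrix n n ℂ) : ℝ :=
  sInf {l : ℝ | ((((2:ℝ)^l : ℝ) : ℂ) • σ - ρ).PosSemidef}

/-- smooth hypothesis testing divergence. -/
noncomputable def DH (ε : ℝ) (ρ τ : Matrix n n ℂ) : ℝ :=
  sSup {r : ℝ | ∃ P : Matrix n n ℂ, P.PosSemidef ∧ ((1 : Matrix n n ℂ) - P).PosSemidef ∧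
    1 - ε ≤ ((P * ρ).trace).re ∧ r = - Real.logb 2 ((P * τ).trace).re}

/-- functional calculus for hermitian matrices (0 otherwise). -/
noncomputable def hermCFC (f : ℝ → ℝ) (A : Matrix n n ℂ) : Matrix n n ℂ :=
  if h : A.IsHermitian then
    (Matrix.IsHermitian.eigenvectorUnitary h : Matrix n n ℂ) *
      Matrix.diagonal (fun i => (f (h.eigenvalues i) : ℂ)) *
      (star (Matrix.IsHermitian.eigenvectorUnitary h : Matrix n n ℂ))
  else 0

/-- von Neumann entropy (base 2). -/
noncomputable def vnEntropy (ρ : Matrix n n ℂ) : ℝ :=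
  if h : ρ.IsHermitian then -∑ i, (h.eigenvalues i) * Real.logb 2 (h.eigenvalues i) else 0

end

/-!
Let `p` be the support projection of `σ`. The kernel condition gives `ρ (1 - p) = 0`, hence
`ρ = p ρ p ≤ t p ≤ t c σ`, where `t` bounds the spectrum of `ρ` and `c` bounds the inverses of the
nonzero eigenvalues of `σ`; so some `2 ^ λ σ - ρ` is positive semidefinite. A Kraus map sends
positive semidefinite matrices to positive semidefinite ones, so every feasible `λ` for `(ρ, σ)` is
feasible for `(E ρ, E σ)`, and trace preservation forces `2 ^ λ ≥ 1` for the latter, which bounds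
that set below and makes the infima comparable.
-/

open scoped MatrixOrder

namespace Matrix

variable {𝕜 : Type*} [RCLike 𝕜] {n : Type*} [Fintype n]

lemma mul_eq_zero_of_ker_le {m l : Type*} [Fintype l] {A B : Matrix m n 𝕜}
    (h : ∀ v, A *ᵥ v = 0 → B *ᵥ v = 0) {M : Matrix n l 𝕜} (hM : A * M = 0) : B * M = 0 :=
  ext_iff_mulVec.2 fun v => by
    simpa [← mulVec_mulVec] using h (M *ᵥ v) (by rw [mulVec_mulVec, hM, zero_mulVec])

lemma monotone_of_kraus {m ι : Type*} [Fintype m] [Fintype ι]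
    {E : Matrix n n 𝕜 →ₗ[𝕜] Matrix m m 𝕜} (K : ι → Matrix m n 𝕜)
    (hK : ∀ X, E X = ∑ i, K i * X * (K i)ᴴ) : Monotone E :=
  fun X Y h => by
    rw [le_iff, ← map_sub, hK]
    exact posSemidef_sum _ fun i _ => (le_iff.mp h).mul_mul_conjTranspose_same (K i)

lemma one_le_of_le_smul_of_trace_eq_one {ρ σ : Matrix n n 𝕜} (hρ : ρ.trace = 1)
    (hσ : σ.trace = 1) {a : ℝ} (h : ρ ≤ a • σ) : 1 ≤ a := by
  have := (le_iff.mp h).trace_nonneg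
  rw [trace_sub, trace_smul, hρ, hσ, RCLike.real_smul_eq_coe_smul (K := 𝕜), smul_eq_mul, mul_one,
    ← RCLike.ofReal_one, ← RCLike.ofReal_sub, RCLike.ofReal_nonneg] at this
  linarith

variable [DecidableEq n]

noncomputable def supportProj (σ : Matrix n n 𝕜) : Matrix n n 𝕜 :=
  cfc (fun x : ℝ => if x = 0 then 0 else 1) σ

variable {σ : Matrix n n 𝕜}

lemma isSelfAdjoint_supportProj : IsSelfAdjoint (supportProj σ) := cfc_predicate _ _

lemma supportProj_mul_self : supportProj σ * supportProj σ = supportProj σ := by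
  rw [supportProj, ← cfc_mul _ _ σ (finite_real_spectrum.continuousOn _)
    (finite_real_spectrum.continuousOn _)]
  exact cfc_congr fun x _ => by split_ifs <;> simp

lemma mul_supportProj (hσ : σ.IsHermitian) : σ * supportProj σ = σ :=
  calc σ * supportProj σ = cfc (fun x : ℝ => x * if x = 0 then 0 else 1) σ := by
        rw [cfc_mul (fun x : ℝ => x) _ σ (by fun_prop) (finite_real_spectrum.continuousOn _),
          cfc_id' ℝ σ hσ.isSelfAdjoint, supportProj]
    _ = cfc (fun x : ℝ => x) σ := cfc_congr fun x _ => by split_ifs <;> simp_all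
    _ = σ := cfc_id' ℝ σ hσ.isSelfAdjoint

lemma PosSemidef.exists_supportProj_le_smul (hσ : σ.PosSemidef) :
    ∃ c : ℝ, supportProj σ ≤ c • σ := by
  obtain ⟨c, hc⟩ := (finite_real_spectrum (A := σ)).image (·⁻¹) |>.bddAbove
  refine ⟨c, ?_⟩
  rw [← cfc_const_mul_id c σ hσ.isHermitian.isSelfAdjoint]
  refine cfc_mono (fun x hx => ?_) (finite_real_spectrum.continuousOn _)
  have hx0 : 0 ≤ x := spectrum_nonneg_of_nonneg hσ.nonneg hx
  split_ifs with h
  · simp [h]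
  · calc (1 : ℝ) = x * x⁻¹ := (mul_inv_cancel₀ h).symm
      _ ≤ x * c := mul_le_mul_of_nonneg_left (hc ⟨x, hx, rfl⟩) hx0
      _ = c * x := mul_comm _ _

lemma IsHermitian.exists_le_smul_one {ρ : Matrix n n 𝕜} (hρ : ρ.IsHermitian) :
    ∃ t : ℝ, 0 ≤ t ∧ ρ ≤ t • 1 := by
  obtain ⟨t, ht⟩ := (finite_real_spectrum (A := ρ)).bddAbove
  refine ⟨max t 0, le_max_right _ _, ?_⟩
  rw [← Algebra.algebraMap_eq_smul_one]
  exact le_algebraMap_of_spectrum_le (fun x hx => (ht hx).trans (le_max_left _ _))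
    hρ.isSelfAdjoint

lemma exists_le_smul_of_ker_le {ρ : Matrix n n 𝕜} (hρ : ρ.IsHermitian) (hσ : σ.PosSemidef)
    (hker : ∀ v, σ *ᵥ v = 0 → ρ *ᵥ v = 0) : ∃ c : ℝ, ρ ≤ c • σ := by
  set p := supportProj σ
  have hp : IsSelfAdjoint p := isSelfAdjoint_supportProj
  have hρp : ρ * p = ρ := by
    have := mul_eq_zero_of_ker_le hker (M := 1 - p) <| by
      rw [mul_sub, mul_one, mul_supportProj hσ.1, sub_self]
    rwa [mul_sub, mul_one, sub_eq_zero, eq_comm] at this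
  have hpρ : p * ρ = ρ := by
    simpa only [star_mul, hp.star_eq, hρ.isSelfAdjoint.star_eq] using congrArg star hρp
  obtain ⟨t, ht0, ht⟩ := hρ.exists_le_smul_one
  obtain ⟨c, hc⟩ := hσ.exists_supportProj_le_smul
  refine ⟨t * c, ?_⟩
  calc ρ = star p * ρ * p := by rw [hp.star_eq, hpρ, hρp]
    _ ≤ star p * (t • 1) * p := star_left_conjugate_le_conjugate ht p
    _ = t • p := by rw [hp.star_eq, mul_smul_comm, mul_one, smul_mul_assoc, supportProj_mul_self]
    _ ≤ (t * c) • σ := by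
      rw [le_iff, mul_smul, ← smul_sub]
      exact (le_iff.mp hc).smul ht0

lemma exists_le_rpow_two_smul_of_ker_le {ρ : Matrix n n 𝕜} (hρ : ρ.IsHermitian)
    (hσ : σ.PosSemidef) (hker : ∀ v, σ *ᵥ v = 0 → ρ *ᵥ v = 0) :
    ∃ l : ℝ, ρ ≤ (2 : ℝ) ^ l • σ := by
  obtain ⟨c, hc⟩ := exists_le_smul_of_ker_le hρ hσ hker
  refine ⟨Real.logb 2 (max c 1), ?_⟩
  rw [Real.rpow_logb two_pos (by norm_num) (lt_max_of_lt_right one_pos)]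
  refine hc.trans ?_
  rw [le_iff, ← sub_smul]
  exact hσ.smul (sub_nonneg.2 (le_max_left _ _))

end Matrix

lemma dmax_eq_sInf {n : Type*} (ρ σ : Matrix n n ℂ) :
    Dmax ρ σ = sInf {l : ℝ | ρ ≤ (2 : ℝ) ^ l • σ} := by
  simp only [Dmax, le_iff, Complex.coe_smul]

open Matrix ComplexOrder in
theorem dmax_monotone_cptp_general {n m : Type*} [Fintype n] [DecidableEq n] [Fintype m]
    (ρ σ : Matrix n n ℂ) (hρ : IsDensityMatrix ρ) (hσ : IsDensityMatrix σ)
    (hsupp : ∀ v : n → ℂ, σ *ᵥ v = 0 → ρ *ᵥ v = 0)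
    (E : Matrix n n ℂ →ₗ[ℂ] Matrix m m ℂ)
    (hCP : ∃ (r : ℕ) (K : Fin r → Matrix m n ℂ), ∀ X, E X = ∑ i, K i * X * (K i)ᴴ)
    (hTP : ∀ X, (E X).trace = X.trace) :
    Dmax (E ρ) (E σ) ≤ Dmax ρ σ := by
  obtain ⟨r, K, hK⟩ := hCP
  rw [dmax_eq_sInf, dmax_eq_sInf]
  refine csInf_le_csInf ⟨0, fun l hl => ?_⟩
    (exists_le_rpow_two_smul_of_ker_le hρ.1.1 hσ.1 hsupp) fun l hl => ?_
  · have := one_le_of_le_smul_of_trace_eq_one (by rw [hTP, hρ.2]) (by rw [hTP, hσ.2]) hl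
    exact (Real.rpow_le_rpow_left_iff one_lt_two).mp (by rwa [Real.rpow_zero])
  · show E ρ ≤ (2 : ℝ) ^ l • E σ
    rw [← LinearMap.map_smul_of_tower]
    exact monotone_of_kraus K hK hl

open Matrix ComplexOrder in
/-- Monotonicity of the max-relative entropy under CPTP maps (given via a Kraus
representation): `D_max(E(ρ)‖E(σ)) ≤ D_max(ρ‖σ)` when `supp(ρ) ⊆ supp(σ)`. -/
theorem dmax_monotone_cptp {n m : Type*} [Fintype n] [DecidableEq n] [Fintype m] [DecidableEq m]
    (ρ σ : Matrix n n ℂ) (hρ : IsDensityMatrix ρ) (hσ : IsDensityMatrix σ)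
    (hsupp : ∀ v : n → ℂ, σ *ᵥ v = 0 → ρ *ᵥ v = 0)
    (E : Matrix n n ℂ →ₗ[ℂ] Matrix m m ℂ)
    (hCP : ∃ (r : ℕ) (K : Fin r → Matrix m n ℂ), ∀ X, E X = ∑ i, K i * X * (K i)ᴴ)
    (hTP : ∀ X, (E X).trace = X.trace) :
    Dmax (E ρ) (E σ) ≤ Dmax ρ σ :=
  dmax_monotone_cptp_general ρ σ hρ hσ hsupp E hCP hTP
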